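/- Let δ_L > 0 and 0 < δ_R < 1, and let β ∈ ℝ satisfy β < -1 and p(β) = 0 (in particular, this holds for the smallest real root of p). Let ξ₀ = (δ_L + 1, δ_L, β + δ_R/β, δ_R) and write g(ξ₀) = (τ̃_L, δ̃_L, τ̃_R, δ̃_R). Then τ̃_R < -1/τ̃_L - δ̃_R - 1. -/
import Mathlib


noncomputable section

/-- The renormalisation operator `g`. -/
def gmap (ξ : ℝ × ℝ × ℝ × ℝ) : ℝ × ℝ × ℝ × ℝ :=
  (ξ.2.2.1 ^ 2 - 2 * ξ.2.2.2, ξ.2.2.2 ^ 2, ξ.1 * ξ.2.2.1 - ξ.2.1 - ξ.2.2.2, ξ.2.1 * ξ.2.2.2)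

/-- Key polynomial inequality, in variables `s = -β > 1` and `r = δ_R ∈ (0,1)`. -/
lemma aux_T2_neg (s r : ℝ) (hs : 1 < s) (hr0 : 0 < r) (hr1 : r < 1) :
    -(s^3 + s^4) + (r * s^4 + r^3) * (1 + s + s^3 - s^4)
      - r^2 * (s + s^2 + s^7 - s^6) + r^4 * (s^2 - s^3) < 0 := by
  have hs0 : 0 < s := by linarith
  have h3 : 0 < s^3 - 1 := by nlinarith [mul_pos (sub_pos.2 hs) (by positivity : (0:ℝ) < s^2 + s + 1)]
  have h4 : 0 < s^4 - 1 := by nlinarith [mul_pos (by nlinarith : (0:ℝ) < s^2 - 1) (by positivity : (0:ℝ) < s^2 + 1)]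
  have hrc : r^3 ≤ r := by
    nlinarith [mul_pos (mul_pos hr0 (sub_pos.2 hr1)) (by linarith : (0:ℝ) < 1 + r)]
  have hq : 0 < (s^3 - 1) * (s^4 - 1) + 2 * s := by nlinarith [mul_pos h3 h4]
  have hG : 0 ≤ r * (s - 1) * ((s^3 - 1) * (s^4 - 1) + 2 * s)
      + (r - r^3) * (1 + s + s^3 - s^4) := by
    rcases le_or_gt 0 (1 + s + s^3 - s^4) with hK | hK
    · have ha : 0 ≤ r * (s - 1) * ((s^3 - 1) * (s^4 - 1) + 2 * s) :=
        mul_nonneg (mul_nonneg hr0.le (by linarith)) hq.le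
      have hb : 0 ≤ (r - r^3) * (1 + s + s^3 - s^4) := mul_nonneg (by linarith) hK
      linarith
    · -- K < 0 : use (s-1)*q + K ≥ 0 and r - r^3 ≤ r
      have hh : 0 ≤ (s - 1) * ((s^3 - 1) * (s^4 - 1) + 2 * s) + (1 + s + s^3 - s^4) := by
        nlinarith [sq_nonneg (s - 1), sq_nonneg (s^2 - 1), mul_pos hs0 hs0,
          mul_nonneg (mul_nonneg (sub_nonneg.2 hs.le) (sub_nonneg.2 hs.le))
            (sub_nonneg.2 hs.le), pow_pos hs0 3, pow_pos hs0 4]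
      nlinarith [mul_nonneg (mul_nonneg hr0.le (sub_nonneg.2 hrc))
          (neg_nonneg.2 hK.le), mul_nonneg hr0.le hh,
        mul_nonneg (mul_nonneg hr0.le hr0.le) (neg_nonneg.2 hK.le)]
  nlinarith [mul_pos (by nlinarith : (0:ℝ) < s + s^2) (by nlinarith : (0:ℝ) < (r - s)^2),
    mul_nonneg (mul_nonneg (mul_nonneg hr0.le hr0.le) (pow_pos hs0 6).le)
      (sub_nonneg.2 hs.le),
    mul_nonneg (mul_nonneg (mul_nonneg (mul_nonneg hr0.le hr0.le)
      (mul_nonneg hr0.le hr0.le)) (mul_pos hs0 hs0).le) (sub_nonneg.2 hs.le), hG]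

/-- Lemma 6.2: for `δ_L > 0`, `0 < δ_R < 1`, and `β < -1` a root of the cubic `p`,
writing `g(ξ₀) = (τ̃_L, δ̃_L, τ̃_R, δ̃_R)` where `ξ₀ = (δ_L+1, δ_L, β + δ_R/β, δ_R)`,
one has `τ̃_R < -1/τ̃_L - δ̃_R - 1`. -/
theorem g_xi0_below_curve (dL dR β : ℝ) (h0 : 0 < dL) (h1 : 0 < dR) (h2 : dR < 1)
    (hβ : β < -1)
    (hroot : (1 + dL) * β ^ 3 + (1 - dL - dR) * β ^ 2 - (1 + dL) * β + dL = 0) :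
    (gmap (dL + 1, dL, β + dR / β, dR)).2.2.1 <
      -1 / (gmap (dL + 1, dL, β + dR / β, dR)).1
        - (gmap (dL + 1, dL, β + dR / β, dR)).2.2.2 - 1 := by
  have hb0 : β ≠ 0 := by intro h; rw [h] at hβ; linarith
  have hbneg : β < 0 := by linarith
  have hden : (0:ℝ) < β^4 + dR^2 := by positivity
  set T : ℝ := ((dL+1)*(β^2+dR) + (1-dL)*(1-dR)*β) * (β^4+dR^2) + β^3 with hTdef
  -- eliminate dL using the root equation
  have hT2 : T * ((β-1)^2*(β+1)) =
      dR^3 + β*dR^2 - β*dR^3 - β^2*dR^2 + β^2*dR^4 + β^3 - β^3*dR^3 + β^3*dR^4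
        - β^4 + β^4*dR - β^4*dR^3 - β^5*dR + β^6*dR^2 - β^7*dR + β^7*dR^2 - β^8*dR := by
    linear_combination (β^6 + β^2*dR^2 + β^4*dR + dR^3 - β^5 - β*dR^2 + β^5*dR + β*dR^3) * hroot
  have hT2neg : dR^3 + β*dR^2 - β*dR^3 - β^2*dR^2 + β^2*dR^4 + β^3 - β^3*dR^3 + β^3*dR^4
        - β^4 + β^4*dR - β^4*dR^3 - β^5*dR + β^6*dR^2 - β^7*dR + β^7*dR^2 - β^8*dR < 0 := by
    have := aux_T2_neg (-β) dR (by linarith) h1 h2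
    nlinarith [this]
  have hdneg : (β-1)^2*(β+1) < 0 := by
    have h1 : (0:ℝ) < (β-1)^2 := by nlinarith
    have h2 : β + 1 < 0 := by linarith
    nlinarith
  have hT : 0 < T := by
    by_contra h
    push_neg at h
    nlinarith [mul_nonneg (neg_nonneg.2 h) (neg_nonneg.2 hdneg.le)]
  -- relate T to the goal
  have htL : (gmap (dL + 1, dL, β + dR / β, dR)).1 = (β^4 + dR^2) / β^2 := by
    simp only [gmap]
    field_simp
    ring
  have hb2 : (0:ℝ) < β^2 := by nlinarith
  have htLpos : (0:ℝ) < (β^4 + dR^2) / β^2 := div_pos hden hb2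
  have key : -1 / ((β^4 + dR^2) / β^2)
        - (gmap (dL + 1, dL, β + dR / β, dR)).2.2.2 - 1
        - (gmap (dL + 1, dL, β + dR / β, dR)).2.2.1
      = T / (-β * (β^4 + dR^2)) := by
    simp only [gmap, hTdef]
    field_simp
    ring
  have : 0 < T / (-β * (β^4 + dR^2)) :=
    div_pos hT (mul_pos (by linarith) hden)
  rw [htL]
  linarith [key ▸ this]
end
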